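/- arXiv:2106.03091 — 3 statements merged into one kernel-verified Lean document; each statement's English description precedes it below -/
import Mathlib

section
/- For any fixed α > 0, the function ζ(z) = z · u^{-1}(α/z) is increasing in z on (0,∞), where u(t) = (1+t)log(1+t) - t. -/
open Real

private lemma g_hasDeriv {t : ℝ} (ht : 0 < t) :
    HasDerivAt (fun t : ℝ => (1 + t) * Real.log (1 + t) / t)
      ((t - Real.log (1 + t)) / t ^ 2) t := by
  have h1t : (0:ℝ) < 1 + t := by linarith
  have h1 : HasDerivAt (fun t : ℝ => 1 + t) 1 t := by
    simpa using (hasDerivAt_id t).const_add 1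
  have h2 : HasDerivAt (fun t : ℝ => Real.log (1 + t)) (1 / (1 + t) * 1) t := by
    have := (Real.hasDerivAt_log h1t.ne').comp t h1
    rw [one_div]; exact this
  have h3 : HasDerivAt (fun t : ℝ => (1 + t) * Real.log (1 + t))
      (1 * Real.log (1 + t) + (1 + t) * (1 / (1 + t) * 1)) t := h1.mul h2
  have h4 := h3.div (hasDerivAt_id t) ht.ne'
  refine h4.congr_deriv ?_
  simp only [id]
  field_simp
  ring

private lemma g_mono : MonotoneOn (fun t : ℝ => (1 + t) * Real.log (1 + t) / t)
    (Set.Ioi (0:ℝ)) := by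
  have hconv : Convex ℝ (Set.Ioi (0:ℝ)) := convex_Ioi 0
  have hder : ∀ x ∈ interior (Set.Ioi (0:ℝ)),
      HasDerivAt (fun t : ℝ => (1 + t) * Real.log (1 + t) / t)
        ((x - Real.log (1 + x)) / x ^ 2) x := by
    intro x hx
    rw [interior_Ioi] at hx
    exact g_hasDeriv hx
  apply monotoneOn_of_deriv_nonneg hconv
  · apply ContinuousOn.div
    · exact (continuousOn_const.add continuousOn_id).mul
        ((Real.continuousOn_log.comp (continuousOn_const.add continuousOn_id)
          (fun x hx => by simp only [Set.mem_Ioi] at hx; intro h; simp at h; linarith)))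
    · exact continuousOn_id
    · intro x hx; exact (Set.mem_Ioi.mp hx).ne'
  · intro x hx
    exact (hder x hx).differentiableAt.differentiableWithinAt
  · intro x hx
    rw [(hder x hx).deriv]
    rw [interior_Ioi] at hx
    have hxpos := Set.mem_Ioi.mp hx
    have hlog : Real.log (1 + x) ≤ x := by
      have := Real.log_le_sub_one_of_pos (show (0:ℝ) < 1 + x by linarith)
      linarith
    apply div_nonneg (by linarith) (by positivity)

/-- For fixed `α > 0`, the map `z ↦ z · u⁻¹(α / z)` is increasing on `(0, ∞)`,
where `u(t) = (1+t) log(1+t) - t` and `invu` is its inverse on `[0, ∞)`. -/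
theorem stmt_3 (u : ℝ → ℝ) (hu : ∀ t, u t = (1 + t) * Real.log (1 + t) - t)
    (invu : ℝ → ℝ) (hinvu : ∀ s, 0 ≤ s → 0 ≤ invu s ∧ u (invu s) = s)
    (hinvu' : ∀ t, 0 ≤ t → invu (u t) = t)
    (α : ℝ) (hα : 0 < α) :
    MonotoneOn (fun z : ℝ => z * invu (α / z)) (Set.Ioi (0:ℝ)) := by
  -- u is strictly monotone on Ici 0
  have huderiv : ∀ x ∈ interior (Set.Ici (0:ℝ)), HasDerivAt u (Real.log (1 + x)) x := by
    intro x hx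
    rw [interior_Ici] at hx
    have heq : u = fun t : ℝ => (1 + t) * Real.log (1 + t) - t := funext hu
    rw [heq]
    have h1t : (0:ℝ) < 1 + x := by linarith [Set.mem_Ioi.mp hx]
    have h1 : HasDerivAt (fun t : ℝ => 1 + t) 1 x := by
      simpa using (hasDerivAt_id x).const_add 1
    have h2 : HasDerivAt (fun t : ℝ => Real.log (1 + t)) (1 / (1 + x) * 1) x := by
      rw [one_div]; exact (Real.hasDerivAt_log h1t.ne').comp x h1
    have h3 := (h1.mul h2).sub (hasDerivAt_id x)
    refine h3.congr_deriv ?_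
    field_simp
    ring
  have humono : StrictMonoOn u (Set.Ici (0:ℝ)) := by
    apply strictMonoOn_of_deriv_pos (convex_Ici 0)
    · have heq : u = fun t : ℝ => (1 + t) * Real.log (1 + t) - t := funext hu
      rw [heq]
      apply ContinuousOn.sub _ continuousOn_id
      exact (continuousOn_const.add continuousOn_id).mul
        ((Real.continuousOn_log.comp (continuousOn_const.add continuousOn_id)
          (fun x hx => by simp only [Set.mem_Ici] at hx; intro h; simp at h; linarith)))
    · intro x hx
      rw [(huderiv x hx).deriv]
      rw [interior_Ici] at hx
      have := Set.mem_Ioi.mp hx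
      have : (1:ℝ) < 1 + x := by linarith
      exact Real.log_pos this
  have hu0 : u 0 = 0 := by rw [hu]; simp
  intro z₁ hz₁ z₂ hz₂ hle
  simp only [Set.mem_Ioi] at hz₁ hz₂
  set s₁ := α / z₁ with hs₁
  set s₂ := α / z₂ with hs₂
  have hs₁pos : 0 < s₁ := div_pos hα hz₁
  have hs₂pos : 0 < s₂ := div_pos hα hz₂
  obtain ⟨ht₁0, hut₁⟩ := hinvu s₁ hs₁pos.le
  obtain ⟨ht₂0, hut₂⟩ := hinvu s₂ hs₂pos.le
  set t₁ := invu s₁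
  set t₂ := invu s₂
  have ht₁pos : 0 < t₁ := by
    rcases ht₁0.lt_or_eq with h | h
    · exact h
    · exfalso; rw [← h] at hut₁; rw [hu0] at hut₁; linarith
  have ht₂pos : 0 < t₂ := by
    rcases ht₂0.lt_or_eq with h | h
    · exact h
    · exfalso; rw [← h] at hut₂; rw [hu0] at hut₂; linarith
  -- s₂ ≤ s₁ hence t₂ ≤ t₁
  have hsle : s₂ ≤ s₁ := div_le_div_of_nonneg_left hα.le hz₁ hle
  have htle : t₂ ≤ t₁ := by
    by_contra h
    push_neg at h
    have := humono ht₁0 ht₂0 h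
    rw [hut₁, hut₂] at this
    linarith
  -- rewrite goal
  show z₁ * t₁ ≤ z₂ * t₂
  have hz₁eq : z₁ = α / u t₁ := by rw [hut₁, hs₁]; field_simp
  have hz₂eq : z₂ = α / u t₂ := by rw [hut₂, hs₂]; field_simp
  have hut₁pos : 0 < u t₁ := by rw [hut₁]; exact hs₁pos
  have hut₂pos : 0 < u t₂ := by rw [hut₂]; exact hs₂pos
  rw [hz₁eq, hz₂eq, div_mul_eq_mul_div, div_mul_eq_mul_div,
    div_le_div_iff₀ hut₁pos hut₂pos]
  -- need α * t₁ * u t₂ ≤ α * t₂ * u t₁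
  have key : t₁ * u t₂ ≤ t₂ * u t₁ := by
    have hg := g_mono (Set.mem_Ioi.mpr ht₂pos) (Set.mem_Ioi.mpr ht₁pos) htle
    simp only at hg
    rw [div_le_div_iff₀ ht₂pos ht₁pos] at hg
    rw [hu t₁, hu t₂]
    nlinarith [hg]
  nlinarith [key, hα.le]
end

section
/- Let f(γ) = (1/π)(√(1-γ²) + γ·arcsin γ) + γ/2 for γ ∈ [-1,1]. Then f(1) = 1, f(-1) = 0, f(0) = 1/π, and f is nondecreasing on [-1,1] with f(γ) ≥ γ for all γ ∈ [-1,1]. -/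
open Real Set

lemma aux_deriv (x : ℝ) (hx : x ∈ Set.Ioo (-1:ℝ) 1) :
    HasDerivAt (fun γ : ℝ => (1 / Real.pi) * (Real.sqrt (1 - γ ^ 2) + γ * Real.arcsin γ) + γ / 2)
      ((1 / Real.pi) * Real.arcsin x + 1 / 2) x := by
  obtain ⟨h1, h2⟩ := hx
  have hpos : 0 < 1 - x ^ 2 := by nlinarith
  have hsq : Real.sqrt (1 - x ^ 2) ≠ 0 := by positivity
  have hd1 : HasDerivAt (fun γ : ℝ => 1 - γ ^ 2) (-(2 * x)) x := by
    simpa using ((hasDerivAt_pow 2 x).const_sub 1)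
  have hd2 : HasDerivAt (fun γ : ℝ => Real.sqrt (1 - γ ^ 2))
      (1 / (2 * Real.sqrt (1 - x ^ 2)) * -(2 * x)) x :=
    (Real.hasDerivAt_sqrt (ne_of_gt hpos)).comp x hd1
  have hd3 : HasDerivAt Real.arcsin (1 / Real.sqrt (1 - x ^ 2)) x :=
    Real.hasDerivAt_arcsin (by linarith) (by linarith)
  have hd4 : HasDerivAt (fun γ : ℝ => γ * Real.arcsin γ)
      (1 * Real.arcsin x + x * (1 / Real.sqrt (1 - x ^ 2))) x :=
    (hasDerivAt_id x).mul hd3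
  have hd5 := ((hd2.add hd4).const_mul (1 / Real.pi)).add
      ((hasDerivAt_id x).div_const 2)
  convert hd5 using 1
  · rfl
  · rfl
  · funext γ
    simp [Pi.add_apply]
  · field_simp
    ring

/-- Properties of the ReLU correlation map
`f(γ) = (1/π)(√(1-γ²) + γ arcsin γ) + γ/2`:
`f(1) = 1`, `f(-1) = 0`, `f(0) = 1/π`, `f` is nondecreasing on `[-1,1]`,
and `f(γ) ≥ γ` on `[-1,1]`. -/
theorem stmt_10 (f : ℝ → ℝ)
    (hf : ∀ γ, f γ = (1 / Real.pi) * (Real.sqrt (1 - γ ^ 2) + γ * Real.arcsin γ) + γ / 2) :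
    f 1 = 1 ∧ f (-1) = 0 ∧ f 0 = 1 / Real.pi ∧
      MonotoneOn f (Set.Icc (-1:ℝ) 1) ∧ ∀ γ ∈ Set.Icc (-1:ℝ) 1, γ ≤ f γ := by
  have hpi := Real.pi_pos
  have hfun : ∀ γ, f γ = (fun γ : ℝ => (1 / Real.pi) * (Real.sqrt (1 - γ ^ 2) + γ * Real.arcsin γ) + γ / 2) γ := hf
  have hcont : ContinuousOn f (Set.Icc (-1:ℝ) 1) := by
    rw [funext hfun]
    apply ContinuousOn.add
    · exact (continuousOn_const.mul (((Real.continuous_sqrt.comp (by continuity)).continuousOn).add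
        (continuousOn_id.mul Real.continuous_arcsin.continuousOn)))
    · exact continuousOn_id.div_const 2
  have hint : interior (Set.Icc (-1:ℝ) 1) = Set.Ioo (-1:ℝ) 1 := interior_Icc
  have hderiv : ∀ x ∈ Set.Ioo (-1:ℝ) 1,
      HasDerivAt f ((1 / Real.pi) * Real.arcsin x + 1 / 2) x := by
    intro x hx
    rw [funext hfun]
    exact aux_deriv x hx
  have hf1 : f 1 = 1 := by
    rw [hf]
    rw [Real.arcsin_one]
    norm_num
    field_simp
    norm_num
  have hfm1 : f (-1) = 0 := by
    rw [hf]
    simp [Real.arcsin_neg, Real.arcsin_one]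
    field_simp
    norm_num
  have hf0 : f 0 = 1 / Real.pi := by
    rw [hf]; simp
  have hmono : MonotoneOn f (Set.Icc (-1:ℝ) 1) := by
    apply monotoneOn_of_deriv_nonneg (convex_Icc _ _) hcont
    · rw [hint]
      intro x hx
      exact (hderiv x hx).differentiableAt.differentiableWithinAt
    · rw [hint]
      intro x hx
      rw [(hderiv x hx).deriv]
      have := Real.neg_pi_div_two_le_arcsin x
      have h : (1 / Real.pi) * Real.arcsin x ≥ (1 / Real.pi) * (-(Real.pi / 2)) := by
        apply mul_le_mul_of_nonneg_left this (by positivity)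
      have : (1 / Real.pi) * (-(Real.pi / 2)) = -(1/2) := by field_simp
      linarith
  refine ⟨hf1, hfm1, hf0, hmono, ?_⟩
  -- g = f - id is antitone, g 1 = 0
  set g : ℝ → ℝ := fun γ => f γ - γ with hg
  have hganti : AntitoneOn g (Set.Icc (-1:ℝ) 1) := by
    apply antitoneOn_of_deriv_nonpos (convex_Icc _ _)
    · exact hcont.sub continuousOn_id
    · rw [hint]
      intro x hx
      exact ((hderiv x hx).sub (hasDerivAt_id x)).differentiableAt.differentiableWithinAt
    · rw [hint]
      intro x hx
      have hd : HasDerivAt g ((1 / Real.pi) * Real.arcsin x + 1 / 2 - 1) x :=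
        (hderiv x hx).sub (hasDerivAt_id x)
      rw [hd.deriv]
      have := Real.arcsin_le_pi_div_two x
      have h : (1 / Real.pi) * Real.arcsin x ≤ (1 / Real.pi) * (Real.pi / 2) := by
        apply mul_le_mul_of_nonneg_left this (by positivity)
      have : (1 / Real.pi) * (Real.pi / 2) = 1/2 := by field_simp
      linarith
  intro γ hγ
  have h1 : (1:ℝ) ∈ Set.Icc (-1:ℝ) 1 := by norm_num
  have := hganti hγ h1 hγ.2
  have hg1 : g 1 = 0 := by simp [hg, hf1]
  have : g γ ≥ 0 := by rw [hg1] at this; linarith [this]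
  simpa [hg] using this
end

section
/- With stochastic depth and survival probabilities p_1,...,p_L, the gradient-norm ratio satisfies q̃_l = Π_{k=l+1}^L (1+p_k), while without stochastic depth q̃_l = 2^{L-l}. Consequently, q̃_l with stochastic depth is at most q̃_l without stochastic depth, with equality iff p_k = 1 for all k > l. -/
/-- Gradient-norm growth: with stochastic depth, the recursion `q̃_l = (1+p_{l+1}) q̃_{l+1}`,
`q̃_L = 1` gives `q̃_l = ∏_{k=l+1}^L (1+p_k)`; without stochastic depth it gives `2^{L-l}`.
The stochastic-depth ratio is at most the ratio without it, with equality iff `p_k = 1`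
for all `k > l`. -/
theorem stmt_11 (L : ℕ) (p : ℕ → ℝ) (hp : ∀ k, p k ∈ Set.Icc (0:ℝ) 1)
    (q qs : ℕ → ℝ)
    (hqL : q L = 1) (hq : ∀ l, l < L → q l = (1 + p (l + 1)) * q (l + 1))
    (hqsL : qs L = 1) (hqs : ∀ l, l < L → qs l = 2 * qs (l + 1)) :
    ∀ l ≤ L,
      q l = ∏ k ∈ Finset.Ioc l L, (1 + p k) ∧
      qs l = 2 ^ (L - l) ∧
      q l ≤ qs l ∧
      (q l = qs l ↔ ∀ k, l < k → k ≤ L → p k = 1) := by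
  suffices H : ∀ n l, l + n = L →
      (q l = ∏ k ∈ Finset.Ioc l L, (1 + p k) ∧
      qs l = 2 ^ (L - l) ∧
      q l ≤ qs l ∧
      (q l = qs l ↔ ∀ k, l < k → k ≤ L → p k = 1)) by
    intro l hl
    exact H (L - l) l (by omega)
  intro n
  induction n with
  | zero =>
    intro l hl
    have : l = L := by omega
    subst this
    simp [hqL, hqsL]
    omega
  | succ n ih =>
    intro l hl
    have hlL : l < L := by omega
    obtain ⟨h1, h2, h3, h4⟩ := ih (l + 1) (by omega)
    have hsplit : q (l + 1) = ∏ k ∈ Finset.Ioc (l+1) L, (1 + p k) := h1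
    have hprod : ∏ k ∈ Finset.Ioc l L, (1 + p k)
        = (1 + p (l + 1)) * ∏ k ∈ Finset.Ioc (l+1) L, (1 + p k) := by
      rw [← Finset.prod_Ioc_consecutive _ (Nat.le_succ l) (by omega), Nat.Ioc_succ_singleton,
        Finset.prod_singleton]
    have hq1 : (1:ℝ) ≤ q (l + 1) := by
      rw [hsplit]
      calc (1:ℝ) = ∏ _k ∈ Finset.Ioc (l+1) L, (1:ℝ) := by simp
        _ ≤ ∏ k ∈ Finset.Ioc (l+1) L, (1 + p k) := by
            apply Finset.prod_le_prod (by intros; norm_num)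
            intro k _; have := (hp k).1; linarith
    have hp1 := hp (l + 1)
    have hqs1 : qs (l + 1) = 2 ^ (L - (l+1)) := h2
    have hqlval : q l = (1 + p (l + 1)) * q (l + 1) := hq l hlL
    have hqslval : qs l = 2 * qs (l + 1) := hqs l hlL
    refine ⟨by rw [hqlval, hprod, hsplit], ?_, ?_, ?_⟩
    · rw [hqslval, hqs1, ← pow_succ']
      congr 1; omega
    · rw [hqlval, hqslval]
      have : (1 + p (l+1)) * q (l+1) ≤ 2 * q (l+1) := by nlinarith [hp1.2]
      nlinarith [h3]
    · constructor
      · intro heq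
        rw [hqlval, hqslval] at heq
        have hle : (1 + p (l+1)) * q (l+1) ≤ 2 * q (l+1) := by nlinarith [hp1.2]
        have hq0 : (0:ℝ) < q (l+1) := by linarith
        have hqeq : q (l+1) = qs (l+1) := by nlinarith [hp1.2, h3]
        have hpe : p (l+1) = 1 := by nlinarith [hqeq ▸ heq]
        intro k hk1 hk2
        rcases Nat.lt_or_ge (l+1) k with h | h
        · exact h4.mp hqeq k h hk2
        · have : k = l + 1 := by omega
          rw [this]; exact hpe
      · intro hall
        have hpe : p (l+1) = 1 := hall (l+1) (by omega) (by omega)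
        have hqeq : q (l+1) = qs (l+1) := h4.mpr (fun k hk1 hk2 => hall k (by omega) hk2)
        rw [hqlval, hqslval, hpe, hqeq]; ring
end
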